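/- arXiv:2010.05685 — 10 statements merged into one kernel-verified Lean document; each statement's English description precedes it below -/
import Mathlib

section
/- Let L be a semiprime (right) Leibniz algebra over a field F and let I be an ideal of L. Then I ∩ Ann_L(I) = {0} and I ∩ ran_L(I) = {0}; moreover, I is essential if and only if Ann_L(I) = {0}, and I is essential if and only if ran_L(I) = {0}. -/
namespace LeibnizQuot

variable {F : Type*} [Field F] {Q : Type*} [AddCommGroup Q] [Module F Q]

/-- The right Leibniz identity `[x,[y,z]] = [[x,y],z] - [[x,z],y]`. -/
def IsRightLeibniz (b : Q →ₗ[F] Q →ₗ[F] Q) : Prop :=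
  ∀ x y z : Q, b x (b y z) = b (b x y) z - b (b x z) y

/-- The left Leibniz identity `[x,[y,z]] = [[x,y],z] + [y,[x,z]]`. -/
def IsLeftLeibniz (b : Q →ₗ[F] Q →ₗ[F] Q) : Prop :=
  ∀ x y z : Q, b x (b y z) = b (b x y) z + b y (b x z)

/-- `I` is an ideal of the whole Leibniz algebra: `[I,L] ⊆ I` and `[L,I] ⊆ I`. -/
def IsIdeal (b : Q →ₗ[F] Q →ₗ[F] Q) (I : Submodule F Q) : Prop :=
  ∀ x ∈ I, ∀ y : Q, b x y ∈ I ∧ b y x ∈ I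

/-- Left annihilator of a subset. -/
def lanSet (b : Q →ₗ[F] Q →ₗ[F] Q) (S : Set Q) : Set Q := {x : Q | ∀ h ∈ S, b x h = 0}

/-- Right annihilator of a subset. -/
def ranSet (b : Q →ₗ[F] Q →ₗ[F] Q) (S : Set Q) : Set Q := {x : Q | ∀ h ∈ S, b h x = 0}

/-- Annihilator of a subset. -/
def annSet (b : Q →ₗ[F] Q →ₗ[F] Q) (S : Set Q) : Set Q := lanSet b S ∩ ranSet b S

/-- The algebra is semiprime: `[I,I] ≠ {0}` for every nonzero ideal `I`. -/
def IsSemiprime (b : Q →ₗ[F] Q →ₗ[F] Q) : Prop :=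
  ∀ I : Submodule F Q, IsIdeal b I → I ≠ ⊥ → ∃ x ∈ I, ∃ y ∈ I, b x y ≠ 0

/-- The algebra is prime: `[I,J] ≠ {0}` for all nonzero ideals `I`, `J`. -/
def IsPrime (b : Q →ₗ[F] Q →ₗ[F] Q) : Prop :=
  ∀ I J : Submodule F Q, IsIdeal b I → IsIdeal b J → I ≠ ⊥ → J ≠ ⊥ →
    ∃ x ∈ I, ∃ y ∈ J, b x y ≠ 0

/-- An ideal is essential if it meets every nonzero ideal nontrivially. -/
def IsEssential (b : Q →ₗ[F] Q →ₗ[F] Q) (I : Submodule F Q) : Prop :=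
  IsIdeal b I ∧ ∀ J : Submodule F Q, IsIdeal b J → J ≠ ⊥ → I ⊓ J ≠ ⊥

/-- `L` is a subalgebra of the ambient Leibniz algebra. -/
def IsSubalgebraOf (b : Q →ₗ[F] Q →ₗ[F] Q) (L : Submodule F Q) : Prop :=
  ∀ x ∈ L, ∀ y ∈ L, b x y ∈ L

/-- `I` is an ideal of the subalgebra `L`. -/
def IsIdealOf (b : Q →ₗ[F] Q →ₗ[F] Q) (L I : Submodule F Q) : Prop :=
  I ≤ L ∧ ∀ x ∈ I, ∀ y ∈ L, b x y ∈ I ∧ b y x ∈ I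

/-- `I` is an essential ideal of the subalgebra `L`. -/
def IsEssentialIdealOf (b : Q →ₗ[F] Q →ₗ[F] Q) (L I : Submodule F Q) : Prop :=
  IsIdealOf b L I ∧ ∀ J : Submodule F Q, IsIdealOf b L J → J ≠ ⊥ → I ⊓ J ≠ ⊥

/-- The subalgebra `L` is semiprime. -/
def IsSemiprimeSub (b : Q →ₗ[F] Q →ₗ[F] Q) (L : Submodule F Q) : Prop :=
  ∀ I : Submodule F Q, IsIdealOf b L I → I ≠ ⊥ → ∃ x ∈ I, ∃ y ∈ I, b x y ≠ 0

/-- The subalgebra `L` is prime. -/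
def IsPrimeSub (b : Q →ₗ[F] Q →ₗ[F] Q) (L : Submodule F Q) : Prop :=
  ∀ I J : Submodule F Q, IsIdealOf b L I → IsIdealOf b L J → I ≠ ⊥ → J ≠ ⊥ →
    ∃ x ∈ I, ∃ y ∈ J, b x y ≠ 0

/-- Left annihilator of `S` inside the subalgebra `L`. -/
def lanIn (b : Q →ₗ[F] Q →ₗ[F] Q) (L : Submodule F Q) (S : Set Q) : Set Q :=
  {x : Q | x ∈ L ∧ ∀ s ∈ S, b x s = 0}

/-- Right annihilator of `S` inside the subalgebra `L`. -/
def ranIn (b : Q →ₗ[F] Q →ₗ[F] Q) (L : Submodule F Q) (S : Set Q) : Set Q :=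
  {x : Q | x ∈ L ∧ ∀ s ∈ S, b s x = 0}

/-- Annihilator of `S` inside the subalgebra `L`. -/
def annIn (b : Q →ₗ[F] Q →ₗ[F] Q) (L : Submodule F Q) (S : Set Q) : Set Q :=
  lanIn b L S ∩ ranIn b L S

/-- The right and left multiplication operators `R_x : p ↦ [p,x]` and `L_y : p ↦ [y,p]`
with `x, y ∈ S`. -/
def mulOps (b : Q →ₗ[F] Q →ₗ[F] Q) (S : Set Q) : Set (Module.End F Q) :=
  {f : Module.End F Q | ∃ x ∈ S, f = b.flip x ∨ f = b x}

/-- The set `_L(q)`: the linear span of `q` together with all `ξ(q)`, where `ξ` lies in the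
associative algebra of endomorphisms generated by multiplication operators by elements of `L`. -/
def LqSet (b : Q →ₗ[F] Q →ₗ[F] Q) (L : Submodule F Q) (q : Q) : Set Q :=
  {p : Q | ∃ ξ ∈ Algebra.adjoin F (mulOps b (L : Set Q)), ξ q = p}

/-- The set `(L : q) = {x ∈ L : [x, _L(q)] ⊆ L and [_L(q), x] ⊆ L}`. -/
def LcolonSet (b : Q →ₗ[F] Q →ₗ[F] Q) (L : Submodule F Q) (q : Q) : Set Q :=
  {x : Q | x ∈ L ∧ ∀ p ∈ LqSet b L q, b x p ∈ L ∧ b p x ∈ L}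

/-- The ambient algebra is an algebra of quotients of the subalgebra `L`. -/
def IsAlgebraOfQuotients (b : Q →ₗ[F] Q →ₗ[F] Q) (L : Submodule F Q) : Prop :=
  ∀ p q : Q, p ≠ 0 →
    (∃ x ∈ LcolonSet b L q, b x p ≠ 0) ∨ (∃ y ∈ LcolonSet b L q, b p y ≠ 0)

/-- The ambient algebra is a weak algebra of quotients of the subalgebra `L`. -/
def IsWeakAlgebraOfQuotients (b : Q →ₗ[F] Q →ₗ[F] Q) (L : Submodule F Q) : Prop :=
  ∀ q : Q, q ≠ 0 →
    (∃ x ∈ L, b q x ≠ 0 ∧ b q x ∈ L) ∨ (∃ y ∈ L, b y q ≠ 0 ∧ b y q ∈ L)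

/-- The ambient algebra is ideally absorbed into the subalgebra `L`. -/
def IsIdeallyAbsorbed (b : Q →ₗ[F] Q →ₗ[F] Q) (L : Submodule F Q) : Prop :=
  ∀ q : Q, q ≠ 0 → ∃ I : Submodule F Q, IsIdealOf b L I ∧
    annIn b L (I : Set Q) = {0} ∧
    ((∃ x ∈ I, b x q ≠ 0) ∨ (∃ x ∈ I, b q x ≠ 0)) ∧
    (∀ x ∈ I, b x q ∈ L ∧ b q x ∈ L)

/-- The span of `[I,I]` (more generally, of `[I,J]`). -/
def bracketSpan (b : Q →ₗ[F] Q →ₗ[F] Q) (I J : Submodule F Q) : Submodule F Q :=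
  Submodule.span F {z : Q | ∃ x ∈ I, ∃ y ∈ J, z = b x y}

/-- `Fam` is a power filter of (nonzero) sturdy ideals of the subalgebra `L`. -/
def IsPowerFilterOfSturdyIdeals (b : Q →ₗ[F] Q →ₗ[F] Q) (L : Submodule F Q)
    (Fam : Set (Submodule F Q)) : Prop :=
  Fam.Nonempty ∧
  (∀ I ∈ Fam, IsIdealOf b L I ∧ I ≠ ⊥ ∧ annIn b L (I : Set Q) = {0}) ∧
  (∀ I₁ ∈ Fam, ∀ I₂ ∈ Fam, ∃ I ∈ Fam, I ≤ I₁ ⊓ I₂) ∧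
  (∀ I ∈ Fam, ∃ K ∈ Fam, K ≤ bracketSpan b I I)

/-- The ambient algebra is a Leibniz algebra of Martindale-like quotients of `L`
with respect to the family `Fam`. -/
def IsMartindaleQuotients (b : Q →ₗ[F] Q →ₗ[F] Q) (L : Submodule F Q)
    (Fam : Set (Submodule F Q)) : Prop :=
  ∀ q : Q, q ≠ 0 → ∃ I ∈ Fam,
    ((∃ x ∈ I, b q x ≠ 0) ∨ (∃ x ∈ I, b x q ≠ 0)) ∧
    (∀ x ∈ I, b q x ∈ L ∧ b x q ∈ L)


/-- The right annihilator of an ideal, as a submodule. -/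
def ranSub (b : Q →ₗ[F] Q →ₗ[F] Q) (I : Submodule F Q) : Submodule F Q where
  carrier := ranSet b (I : Set Q)
  zero_mem' := fun h _ => map_zero (b h)
  add_mem' := fun {a c} ha hc h hh => by rw [map_add, ha h hh, hc h hh, add_zero]
  smul_mem' := fun r x hx h hh => by rw [map_smul, hx h hh, smul_zero]

lemma ranSub_isIdeal (b : Q →ₗ[F] Q →ₗ[F] Q) (hb : IsRightLeibniz b)
    (I : Submodule F Q) (hI : IsIdeal b I) : IsIdeal b (ranSub b I) := by
  intro x hx y
  constructor
  · intro h hh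
    rw [hb h x y, hx h hh, hx (b h y) (hI h hh y).1]; simp
  · intro h hh
    rw [hb h y x, hx h hh, hx (b h y) (hI h hh y).1]; simp

/-- In a semiprime right Leibniz algebra `L`, for every ideal `I` one has
`I ∩ Ann_L(I) = {0}` and `I ∩ ran_L(I) = {0}`; moreover `I` is essential iff
`Ann_L(I) = {0}`, and `I` is essential iff `ran_L(I) = {0}`. -/
theorem semiprime_ann_inter_and_essential_iff {F : Type*} [Field F] {L : Type*}
    [AddCommGroup L] [Module F L] (b : L →ₗ[F] L →ₗ[F] L) (hb : IsRightLeibniz b)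
    (hsp : IsSemiprime b) (I : Submodule F L) (hI : IsIdeal b I) :
    ((I : Set L) ∩ annSet b (I : Set L) = {0}) ∧
    ((I : Set L) ∩ ranSet b (I : Set L) = {0}) ∧
    (IsEssential b I ↔ annSet b (I : Set L) = {0}) ∧
    (IsEssential b I ↔ ranSet b (I : Set L) = {0}) := by
  set R := ranSub b I with hR
  have hRid : IsIdeal b R := ranSub_isIdeal b hb I hI
  -- I ⊓ R is an ideal with trivial bracket, hence ⊥ by semiprimeness
  have hJid : IsIdeal b (I ⊓ R) := by
    intro x hx y
    exact ⟨⟨(hI x hx.1 y).1, (hRid x hx.2 y).1⟩, ⟨(hI x hx.1 y).2, (hRid x hx.2 y).2⟩⟩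
  have hJbot : I ⊓ R = ⊥ := by
    by_contra hne
    obtain ⟨x, hx, y, hy, hxy⟩ := hsp (I ⊓ R) hJid hne
    exact hxy (hy.2 x hx.1)
  -- set-level: I ∩ ranSet = {0}
  have hran : (I : Set L) ∩ ranSet b (I : Set L) = {0} := by
    have : ((I ⊓ R : Submodule F L) : Set L) = (I : Set L) ∩ ranSet b (I : Set L) := rfl
    rw [← this, hJbot, Submodule.bot_coe]
  have hann : (I : Set L) ∩ annSet b (I : Set L) = {0} := by
    apply Set.Subset.antisymm
    · intro z hz
      exact hran ▸ Set.mem_inter hz.1 hz.2.2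
    · intro z hz
      rw [Set.mem_singleton_iff] at hz
      subst hz
      exact ⟨I.zero_mem, fun h _ => LinearMap.map_zero₂ b h, fun h _ => map_zero (b h)⟩
  -- essential iff ran = {0}
  have hEran : IsEssential b I ↔ ranSet b (I : Set L) = {0} := by
    constructor
    · intro hE
      have hRbot : R = ⊥ := by
        by_contra hne
        exact hE.2 R hRid hne hJbot
      have : (R : Set L) = ranSet b (I : Set L) := rfl
      rw [← this, hRbot, Submodule.bot_coe]
    · intro hr
      refine ⟨hI, fun J hJ hJne hIJ => hJne ?_⟩
      rw [Submodule.eq_bot_iff]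
      intro j hj
      have hjr : j ∈ ranSet b (I : Set L) := by
        intro h hh
        have : b h j ∈ I ⊓ J := ⟨(hI h hh j).1, (hJ j hj h).2⟩
        rw [hIJ] at this
        exact this
      rw [hr] at hjr
      exact hjr
  have hEann : IsEssential b I ↔ annSet b (I : Set L) = {0} := by
    constructor
    · intro hE
      apply Set.Subset.antisymm
      · intro z hz
        rw [← hEran.mp hE]
        exact hz.2
      · intro z hz
        rw [Set.mem_singleton_iff] at hz
        subst hz
        exact ⟨fun h _ => LinearMap.map_zero₂ b h, fun h _ => map_zero (b h)⟩
    · intro ha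
      refine ⟨hI, fun J hJ hJne hIJ => hJne ?_⟩
      rw [Submodule.eq_bot_iff]
      intro j hj
      have hjr : j ∈ annSet b (I : Set L) := by
        constructor
        · intro h hh
          have : b j h ∈ I ⊓ J := ⟨(hI h hh j).2, (hJ j hj h).1⟩
          rw [hIJ] at this; exact this
        · intro h hh
          have : b h j ∈ I ⊓ J := ⟨(hI h hh j).1, (hJ j hj h).2⟩
          rw [hIJ] at this; exact this
      rw [ha] at hjr
      exact hjr
  exact ⟨hann, hran, hEann, hEran⟩

end LeibnizQuot
end

section
/- Let L be a (right) Leibniz algebra over a field F. Then L is prime if and only if ran_L(I) = {0} for every nonzero ideal I of L. -/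
namespace LeibnizQuot

variable {F : Type*} [Field F] {Q : Type*} [AddCommGroup Q] [Module F Q]

/-- A right Leibniz algebra `L` is prime if and only if `ran_L(I) = {0}` for
every nonzero ideal `I` of `L`. -/
theorem prime_iff_ran_eq_bot {F : Type*} [Field F] {L : Type*} [AddCommGroup L]
    [Module F L] (b : L →ₗ[F] L →ₗ[F] L) (hb : IsRightLeibniz b) :
    IsPrime b ↔ ∀ I : Submodule F L, IsIdeal b I → I ≠ ⊥ →
      ranSet b (I : Set L) = {0} := by
  constructor
  · intro hp I hI hIne
    set R : Submodule F L :=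
      { carrier := ranSet b (I : Set L)
        add_mem' := fun {x y} hx hy => by
          intro h hh
          simp only [map_add, hx h hh, hy h hh, add_zero]
        zero_mem' := fun h _ => map_zero _
        smul_mem' := fun c x hx h hh => by
          simp only [map_smul, hx h hh, smul_zero] } with hRdef
    by_contra hne
    have hRne : R ≠ ⊥ := by
      intro hbot
      apply hne
      ext x
      simp only [Set.mem_singleton_iff]
      constructor
      · intro hx
        have hxR : x ∈ R := hx
        rw [hbot] at hxR
        simpa using hxR
      · rintro rfl
        exact fun h _ => map_zero _
    have hRideal : IsIdeal b R := by
      intro x hx y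
      have hx' : ∀ h ∈ I, b h x = 0 := hx
      constructor
      · intro h hh
        have hI1 : b h y ∈ I := (hI h hh y).1
        rw [hb h x y, hx' h hh, hx' _ hI1]
        simp
      · intro h hh
        have hI1 : b h y ∈ I := (hI h hh y).1
        rw [hb h y x, hx' h hh, hx' _ hI1]
        simp
    obtain ⟨x, hxI, y, hyR, hxy⟩ := hp I R hI hRideal hIne hRne
    exact hxy (hyR x hxI)
  · intro hran I J hI hJ hIne hJne
    by_contra hcon
    push_neg at hcon
    apply hJne
    rw [eq_bot_iff]
    intro y hy
    have hyr : y ∈ ranSet b (I : Set L) := fun h hh => hcon h hh y hy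
    rw [hran I hI hIne] at hyr
    simpa using hyr

end LeibnizQuot
end

section
/- Let L be a subalgebra of a (right) Leibniz algebra Q over a field F, and let q ∈ Q. Then (L : q) is an ideal of L; moreover, (L : q) is maximal among the ideals I of L satisfying [I,q] ⊆ L and [q,I] ⊆ L, i.e., every ideal I of L with [x,q] ∈ L and [q,x] ∈ L for all x ∈ I is contained in (L : q). -/
namespace LeibnizQuot

variable {F : Type*} [Field F] {Q : Type*} [AddCommGroup Q] [Module F Q]

section Aux

variable {F : Type*} [Field F] {Q : Type*} [AddCommGroup Q] [Module F Q]

/-- `q ∈ _L(q)`. -/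
lemma q_mem_LqSet (b : Q →ₗ[F] Q →ₗ[F] Q) (L : Submodule F Q) (q : Q) :
    q ∈ LqSet b L q :=
  ⟨1, one_mem _, rfl⟩

/-- `_L(q)` is closed under bracketing with elements of `L`. -/
lemma LqSet_closed (b : Q →ₗ[F] Q →ₗ[F] Q) (L : Submodule F Q) (q : Q)
    {p : Q} (hp : p ∈ LqSet b L q) {y : Q} (hy : y ∈ L) :
    b p y ∈ LqSet b L q ∧ b y p ∈ LqSet b L q := by
  obtain ⟨ξ, hξ, rfl⟩ := hp
  constructor
  · exact ⟨b.flip y * ξ, mul_mem (Algebra.subset_adjoin ⟨y, hy, Or.inl rfl⟩) hξ, rfl⟩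
  · exact ⟨b y * ξ, mul_mem (Algebra.subset_adjoin ⟨y, hy, Or.inr rfl⟩) hξ, rfl⟩

end Aux

/-- For a subalgebra `L` of a right Leibniz algebra `Q` and `q ∈ Q`, the set
`(L : q)` is an ideal of `L`, maximal among the ideals `I` of `L` with `[I,q] ⊆ L` and
`[q,I] ⊆ L`. -/
theorem Lcolon_isIdeal_and_maximal {F : Type*} [Field F] {Q : Type*} [AddCommGroup Q]
    [Module F Q] (b : Q →ₗ[F] Q →ₗ[F] Q) (hb : IsRightLeibniz b)
    (L : Submodule F Q) (hL : IsSubalgebraOf b L) (q : Q) :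
    ∃ I : Submodule F Q, (I : Set Q) = LcolonSet b L q ∧ IsIdealOf b L I ∧
      ∀ J : Submodule F Q, IsIdealOf b L J →
        (∀ x ∈ J, b x q ∈ L ∧ b q x ∈ L) → J ≤ I := by
  classical
  -- `(L : q)` is a submodule
  refine ⟨{ carrier := LcolonSet b L q
            zero_mem' := ⟨L.zero_mem, fun p _ => by simp⟩
            add_mem' := fun {x y} hx hy => ⟨L.add_mem hx.1 hy.1, fun p hp => by
              constructor
              · simpa using L.add_mem (hx.2 p hp).1 (hy.2 p hp).1
              · simpa using L.add_mem (hx.2 p hp).2 (hy.2 p hp).2⟩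
            smul_mem' := fun c x hx => ⟨L.smul_mem c hx.1, fun p hp => by
              constructor
              · simpa using L.smul_mem c (hx.2 p hp).1
              · simpa using L.smul_mem c (hx.2 p hp).2⟩ }, rfl, ?_, ?_⟩
  · -- ideal of `L`
    refine ⟨fun x hx => hx.1, fun x hx y hy => ?_⟩
    constructor
    · refine ⟨hL x hx.1 y hy, fun p hp => ?_⟩
      constructor
      · have h2 : b (b x y) p = b x (b y p) + b (b x p) y := by
          rw [hb x y p]; abel
        rw [h2]
        exact L.add_mem (hx.2 _ (LqSet_closed b L q hp hy).2).1
          (hL _ (hx.2 p hp).1 y hy)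
      · rw [hb p x y]
        exact L.sub_mem (hL _ (hx.2 p hp).2 y hy)
          (hx.2 _ (LqSet_closed b L q hp hy).1).2
    · refine ⟨hL y hy x hx.1, fun p hp => ?_⟩
      constructor
      · have h2 : b (b y x) p = b y (b x p) + b (b y p) x := by
          rw [hb y x p]; abel
        rw [h2]
        exact L.add_mem (hL y hy _ (hx.2 p hp).1)
          (hx.2 _ (LqSet_closed b L q hp hy).2).2
      · rw [hb p y x]
        exact L.sub_mem (hx.2 _ (LqSet_closed b L q hp hy).1).2
          (hL _ (hx.2 p hp).2 y hy)
  · -- maximality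
    intro J hJ hJq
    -- the set of "good" elements
    set P : Set Q := {p : Q | ∀ x ∈ J, b x p ∈ L ∧ b p x ∈ L} with hP
    have hPadd : ∀ p₁ ∈ P, ∀ p₂ ∈ P, p₁ + p₂ ∈ P := by
      intro p₁ h₁ p₂ h₂ x hx
      constructor
      · simpa using L.add_mem (h₁ x hx).1 (h₂ x hx).1
      · simpa using L.add_mem (h₁ x hx).2 (h₂ x hx).2
    have hPsmul : ∀ (c : F), ∀ p ∈ P, c • p ∈ P := by
      intro c p h x hx
      constructor
      · simpa using L.smul_mem c (h x hx).1
      · simpa using L.smul_mem c (h x hx).2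
    have hPcl : ∀ p ∈ P, ∀ y ∈ L, b p y ∈ P ∧ b y p ∈ P := by
      intro p hp y hy
      constructor
      · intro x hx
        constructor
        · rw [hb x p y]
          exact L.sub_mem (hL _ (hp x hx).1 y hy)
            (hp _ ((hJ.2 x hx y hy).1)).1
        · have h2 : b (b p y) x = b p (b y x) + b (b p x) y := by
            rw [hb p y x]; abel
          rw [h2]
          exact L.add_mem (hp _ ((hJ.2 x hx y hy).2)).2
            (hL _ (hp x hx).2 y hy)
      · intro x hx
        constructor
        · rw [hb x y p]
          exact L.sub_mem (hp _ ((hJ.2 x hx y hy).1)).1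
            (hL _ (hp x hx).1 y hy)
        · have h2 : b (b y p) x = b y (b p x) + b (b y x) p := by
            rw [hb y p x]; abel
          rw [h2]
          exact L.add_mem (hL y hy _ (hp x hx).2)
            (hp _ ((hJ.2 x hx y hy).2)).1
    have hq : q ∈ P := fun x hx => hJq x hx
    have key : ∀ ξ ∈ Algebra.adjoin F (mulOps b (L : Set Q)), ∀ p ∈ P, ξ p ∈ P := by
      intro ξ hξ
      induction hξ using Algebra.adjoin_induction with
      | mem f hf =>
        obtain ⟨y, hy, hf | hf⟩ := hf
        · intro p hp
          subst hf
          exact (hPcl p hp y hy).1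
        · intro p hp
          subst hf
          exact (hPcl p hp y hy).2
      | algebraMap c =>
        intro p hp
        have : (algebraMap F (Module.End F Q) c) p = c • p := rfl
        rw [this]
        exact hPsmul c p hp
      | add ξ₁ ξ₂ h₁ h₂ ih₁ ih₂ =>
        intro p hp
        have : (ξ₁ + ξ₂) p = ξ₁ p + ξ₂ p := rfl
        rw [this]
        exact hPadd _ (ih₁ p hp) _ (ih₂ p hp)
      | mul ξ₁ ξ₂ h₁ h₂ ih₁ ih₂ =>
        intro p hp
        exact ih₁ _ (ih₂ p hp)
    intro x hx
    refine ⟨hJ.1 hx, fun p hp => ?_⟩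
    obtain ⟨ξ, hξ, rfl⟩ := hp
    exact key ξ hξ q hq x hx


end LeibnizQuot
end

section
/- Let L be a subalgebra of a (right) Leibniz algebra Q over a field F such that Q is a weak algebra of quotients of L. If I is a nonzero ideal of Q, then I ∩ L is a nonzero ideal of L. -/
namespace LeibnizQuot

variable {F : Type*} [Field F] {Q : Type*} [AddCommGroup Q] [Module F Q]

/-- If `Q` is a weak algebra of quotients of its subalgebra `L` and `I` is a
nonzero ideal of `Q`, then `I ∩ L` is a nonzero ideal of `L`. -/
theorem inf_ne_bot_of_weakQuotients {F : Type*} [Field F] {Q : Type*} [AddCommGroup Q]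
    [Module F Q] (b : Q →ₗ[F] Q →ₗ[F] Q) (hb : IsRightLeibniz b)
    (L : Submodule F Q) (hL : IsSubalgebraOf b L)
    (hw : IsWeakAlgebraOfQuotients b L)
    (I : Submodule F Q) (hI : IsIdeal b I) (hI0 : I ≠ ⊥) :
    I ⊓ L ≠ ⊥ ∧ IsIdealOf b L (I ⊓ L) := by
  constructor
  · obtain ⟨q, hqI, hq0⟩ := Submodule.exists_mem_ne_zero_of_ne_bot hI0
    rcases hw q hq0 with ⟨x, hxL, hne, hmem⟩ | ⟨y, hyL, hne, hmem⟩
    · intro h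
      apply hne
      have : b q x ∈ I ⊓ L := ⟨(hI q hqI x).1, hmem⟩
      simpa [h] using this
    · intro h
      apply hne
      have : b y q ∈ I ⊓ L := ⟨(hI q hqI y).2, hmem⟩
      simpa [h] using this
  · refine ⟨inf_le_right, ?_⟩
    rintro x ⟨hxI, hxL⟩ y hyL
    exact ⟨⟨(hI x hxI y).1, hL x hxL y hyL⟩, ⟨(hI x hxI y).2, hL y hyL x hxL⟩⟩

end LeibnizQuot
end

section
/- Let L be a subalgebra of a (right) Leibniz algebra Q over a field F such that Q is a weak algebra of quotients of L. If L is semiprime, then Q is semiprime; if L is prime, then Q is prime. -/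
namespace LeibnizQuot

variable {F : Type*} [Field F] {Q : Type*} [AddCommGroup Q] [Module F Q]

/-- If `Q` is a weak algebra of quotients of its subalgebra `L`, then
semiprimeness (resp. primeness) of `L` implies semiprimeness (resp. primeness) of `Q`. -/
theorem semiprime_and_prime_lift {F : Type*} [Field F] {Q : Type*} [AddCommGroup Q]
    [Module F Q] (b : Q →ₗ[F] Q →ₗ[F] Q) (hb : IsRightLeibniz b)
    (L : Submodule F Q) (hL : IsSubalgebraOf b L)
    (hw : IsWeakAlgebraOfQuotients b L) :
    (IsSemiprimeSub b L → IsSemiprime b) ∧ (IsPrimeSub b L → IsPrime b) := by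
  -- Key facts: for a nonzero ideal I of Q, I ⊓ L is a nonzero ideal of L.
  have hIdeal : ∀ I : Submodule F Q, IsIdeal b I → IsIdealOf b L (I ⊓ L) := by
    intro I hI
    refine ⟨inf_le_right, ?_⟩
    intro x hx y hy
    obtain ⟨hxI, hxL⟩ := hx
    obtain ⟨h1, h2⟩ := hI x hxI y
    exact ⟨⟨h1, hL x hxL y hy⟩, ⟨h2, hL y hy x hxL⟩⟩
  have hNe : ∀ I : Submodule F Q, IsIdeal b I → I ≠ ⊥ → I ⊓ L ≠ ⊥ := by
    intro I hI hne
    obtain ⟨q, hqI, hq0⟩ := Submodule.exists_mem_ne_zero_of_ne_bot hne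
    rcases hw q hq0 with ⟨x, hxL, hbx0, hbxL⟩ | ⟨y, hyL, hby0, hbyL⟩
    · intro hbot
      have : b q x ∈ I ⊓ L := ⟨(hI q hqI x).1, hbxL⟩
      rw [hbot] at this
      exact hbx0 (by simpa using this)
    · intro hbot
      have : b y q ∈ I ⊓ L := ⟨(hI q hqI y).2, hbyL⟩
      rw [hbot] at this
      exact hby0 (by simpa using this)
  constructor
  · intro hsp I hI hne
    obtain ⟨x, hx, y, hy, hxy⟩ := hsp (I ⊓ L) (hIdeal I hI) (hNe I hI hne)
    exact ⟨x, hx.1, y, hy.1, hxy⟩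
  · intro hp I J hI hJ hneI hneJ
    obtain ⟨x, hx, y, hy, hxy⟩ := hp (I ⊓ L) (J ⊓ L) (hIdeal I hI) (hIdeal J hJ)
      (hNe I hI hneI) (hNe J hJ hneJ)
    exact ⟨x, hx.1, y, hy.1, hxy⟩

end LeibnizQuot
end

section
/- Let L be a subalgebra of a (right) Leibniz algebra Q over a field F such that Q is an algebra of quotients of L, and let q ∈ Q. Then (L : q) is an essential ideal of L and Ann_L((L : q)) = {0}. -/
namespace LeibnizQuot

variable {F : Type*} [Field F] {Q : Type*} [AddCommGroup Q] [Module F Q]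

/-- If `Q` is an algebra of quotients of its subalgebra `L`, then for every
`q ∈ Q`, `(L : q)` is an essential ideal of `L` and `Ann_L((L : q)) = {0}`. -/
theorem Lcolon_essential_of_quotients {F : Type*} [Field F] {Q : Type*} [AddCommGroup Q]
    [Module F Q] (b : Q →ₗ[F] Q →ₗ[F] Q) (hb : IsRightLeibniz b)
    (L : Submodule F Q) (hL : IsSubalgebraOf b L)
    (hq : IsAlgebraOfQuotients b L) (q : Q) :
    ∃ I : Submodule F Q, (I : Set Q) = LcolonSet b L q ∧
      IsEssentialIdealOf b L I ∧ annIn b L (LcolonSet b L q) = {0} := by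
  classical
  -- `q ∈ LqSet`
  have hq_mem : q ∈ LqSet b L q := ⟨1, one_mem _, rfl⟩
  -- `LqSet` is closed under left/right multiplication by elements of `L`
  have hclosed : ∀ y ∈ L, ∀ p ∈ LqSet b L q,
      b y p ∈ LqSet b L q ∧ b p y ∈ LqSet b L q := by
    rintro y hy p ⟨ξ, hξ, rfl⟩
    constructor
    · exact ⟨b y * ξ, mul_mem (Algebra.subset_adjoin ⟨y, hy, Or.inr rfl⟩) hξ, rfl⟩
    · exact ⟨b.flip y * ξ, mul_mem (Algebra.subset_adjoin ⟨y, hy, Or.inl rfl⟩) hξ, rfl⟩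
  -- `(L : q)` is a submodule
  refine ⟨{ carrier := LcolonSet b L q
            zero_mem' := ⟨L.zero_mem, fun p _ => by simp⟩
            add_mem' := ?_
            smul_mem' := ?_ }, rfl, ?_, ?_⟩
  · rintro x y ⟨hxL, hx⟩ ⟨hyL, hy⟩
    refine ⟨L.add_mem hxL hyL, fun p hp => ?_⟩
    obtain ⟨hx1, hx2⟩ := hx p hp
    obtain ⟨hy1, hy2⟩ := hy p hp
    constructor
    · rw [map_add, LinearMap.add_apply]; exact L.add_mem hx1 hy1
    · rw [map_add]; exact L.add_mem hx2 hy2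
  · rintro c x ⟨hxL, hx⟩
    refine ⟨L.smul_mem c hxL, fun p hp => ?_⟩
    obtain ⟨hx1, hx2⟩ := hx p hp
    constructor
    · rw [map_smul, LinearMap.smul_apply]; exact L.smul_mem c hx1
    · rw [map_smul]; exact L.smul_mem c hx2
  -- `(L : q)` is an ideal of `L`
  · have hideal : IsIdealOf b L
        { carrier := LcolonSet b L q
          zero_mem' := ⟨L.zero_mem, fun p _ => by simp⟩
          add_mem' := by
            rintro x y ⟨hxL, hx⟩ ⟨hyL, hy⟩
            refine ⟨L.add_mem hxL hyL, fun p hp => ?_⟩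
            obtain ⟨hx1, hx2⟩ := hx p hp
            obtain ⟨hy1, hy2⟩ := hy p hp
            constructor
            · rw [map_add, LinearMap.add_apply]; exact L.add_mem hx1 hy1
            · rw [map_add]; exact L.add_mem hx2 hy2
          smul_mem' := by
            rintro c x ⟨hxL, hx⟩
            refine ⟨L.smul_mem c hxL, fun p hp => ?_⟩
            obtain ⟨hx1, hx2⟩ := hx p hp
            constructor
            · rw [map_smul, LinearMap.smul_apply]; exact L.smul_mem c hx1
            · rw [map_smul]; exact L.smul_mem c hx2 } := by
      refine ⟨fun x hx => hx.1, ?_⟩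
      rintro x ⟨hxL, hx⟩ y hyL
      constructor
      · -- `[x,y] ∈ (L:q)`
        refine ⟨hL x hxL y hyL, fun p hp => ?_⟩
        constructor
        · have h1 : b (b x y) p = b x (b y p) + b (b x p) y := by
            rw [hb x y p]; abel
          rw [h1]
          exact L.add_mem ((hx _ (hclosed y hyL p hp).1).1)
            (hL _ (hx p hp).1 y hyL)
        · have h2 : b p (b x y) = b (b p x) y - b (b p y) x := hb p x y
          rw [h2]
          exact L.sub_mem (hL _ (hx p hp).2 y hyL) ((hx _ (hclosed y hyL p hp).2).2)
      · -- `[y,x] ∈ (L:q)`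
        refine ⟨hL y hyL x hxL, fun p hp => ?_⟩
        constructor
        · have h1 : b (b y x) p = b y (b x p) + b (b y p) x := by
            rw [hb y x p]; abel
          rw [h1]
          exact L.add_mem (hL y hyL _ (hx p hp).1)
            ((hx _ (hclosed y hyL p hp).1).2)
        · have h2 : b p (b y x) = b (b p y) x - b (b p x) y := hb p y x
          rw [h2]
          exact L.sub_mem ((hx _ (hclosed y hyL p hp).2).2)
            (hL _ (hx p hp).2 y hyL)
    refine ⟨hideal, ?_⟩
    -- essentiality
    intro J hJ hJ0 hcontra
    obtain ⟨p, hpJ, hp0⟩ := Submodule.exists_mem_ne_zero_of_ne_bot hJ0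
    rcases hq p q hp0 with ⟨x, hxS, hxp⟩ | ⟨y, hyS, hpy⟩
    · have h1 : b x p ∈ LcolonSet b L q := (hideal.2 x hxS p (hJ.1 hpJ)).1
      have h2 : b x p ∈ J := (hJ.2 p hpJ x (hxS.1)).2
      have : b x p ∈ (⊥ : Submodule F Q) := hcontra ▸ Submodule.mem_inf.mpr ⟨h1, h2⟩
      exact hxp (Submodule.mem_bot F |>.mp this)
    · have h1 : b p y ∈ LcolonSet b L q := (hideal.2 y hyS p (hJ.1 hpJ)).2
      have h2 : b p y ∈ J := (hJ.2 p hpJ y (hyS.1)).1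
      have : b p y ∈ (⊥ : Submodule F Q) := hcontra ▸ Submodule.mem_inf.mpr ⟨h1, h2⟩
      exact hpy (Submodule.mem_bot F |>.mp this)
  -- annihilator is trivial
  · ext x
    simp only [Set.mem_singleton_iff]
    constructor
    · rintro ⟨⟨hxL, hlan⟩, ⟨-, hran⟩⟩
      by_contra hx0
      rcases hq x q hx0 with ⟨s, hsS, hsx⟩ | ⟨s, hsS, hxs⟩
      · exact hsx (hran s hsS)
      · exact hxs (hlan s hsS)
    · rintro rfl
      exact ⟨⟨L.zero_mem, fun s _ => by simp⟩, ⟨L.zero_mem, fun s _ => by simp⟩⟩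

end LeibnizQuot
end

section
/- Let L be a subalgebra of a (right) Leibniz algebra Q over a field F such that Q is ideally absorbed into L, and let q ∈ Q. Then (L : q) is an essential ideal of L and Ann_L((L : q)) = {0}. -/
namespace LeibnizQuot

variable {F : Type*} [Field F] {Q : Type*} [AddCommGroup Q] [Module F Q]

section Aux

variable {F : Type*} [Field F] {Q : Type*} [AddCommGroup Q] [Module F Q]

/-- `(L : q)` as a submodule. -/
def LcolonSub (b : Q →ₗ[F] Q →ₗ[F] Q) (L : Submodule F Q) (q : Q) : Submodule F Q where
  carrier := LcolonSet b L q
  zero_mem' := ⟨L.zero_mem, fun p _ => by simp⟩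
  add_mem' := by
    rintro x y ⟨hxL, hx⟩ ⟨hyL, hy⟩
    refine ⟨L.add_mem hxL hyL, fun p hp => ?_⟩
    obtain ⟨h1, h2⟩ := hx p hp
    obtain ⟨h3, h4⟩ := hy p hp
    constructor
    · have e : b (x + y) p = b x p + b y p := by simp
      rw [e]; exact L.add_mem h1 h3
    · have e : b p (x + y) = b p x + b p y := by simp
      rw [e]; exact L.add_mem h2 h4
  smul_mem' := by
    rintro c x ⟨hxL, hx⟩
    refine ⟨L.smul_mem c hxL, fun p hp => ?_⟩
    obtain ⟨h1, h2⟩ := hx p hp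
    constructor
    · have e : b (c • x) p = c • b x p := by simp
      rw [e]; exact L.smul_mem c h1
    · have e : b p (c • x) = c • b p x := by simp
      rw [e]; exact L.smul_mem c h2

lemma LqSet_bracket {b : Q →ₗ[F] Q →ₗ[F] Q} {L : Submodule F Q} {q : Q}
    {y : Q} (hy : y ∈ L) {p : Q} (hp : p ∈ LqSet b L q) :
    b p y ∈ LqSet b L q ∧ b y p ∈ LqSet b L q := by
  obtain ⟨ξ, hξ, rfl⟩ := hp
  constructor
  · exact ⟨b.flip y * ξ, mul_mem (Algebra.subset_adjoin ⟨y, hy, Or.inl rfl⟩) hξ, rfl⟩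
  · exact ⟨b y * ξ, mul_mem (Algebra.subset_adjoin ⟨y, hy, Or.inr rfl⟩) hξ, rfl⟩

lemma Lcolon_isIdealOf {b : Q →ₗ[F] Q →ₗ[F] Q} (hb : IsRightLeibniz b)
    {L : Submodule F Q} (hL : IsSubalgebraOf b L) (q : Q) :
    IsIdealOf b L (LcolonSub b L q) := by
  refine ⟨fun x hx => hx.1, ?_⟩
  rintro x ⟨hxL, hx⟩ y hyL
  constructor
  · refine ⟨hL x hxL y hyL, fun p hp => ?_⟩
    obtain ⟨h1, h2⟩ := LqSet_bracket hyL hp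
    constructor
    · have e : b (b x y) p = b x (b y p) + b (b x p) y := by rw [hb x y p]; abel
      rw [e]
      exact L.add_mem (hx (b y p) h2).1 (hL _ (hx p hp).1 y hyL)
    · rw [hb p x y]
      exact L.sub_mem (hL _ (hx p hp).2 y hyL) (hx (b p y) h1).2
  · refine ⟨hL y hyL x hxL, fun p hp => ?_⟩
    obtain ⟨h1, h2⟩ := LqSet_bracket hyL hp
    constructor
    · have e : b (b y x) p = b y (b x p) + b (b y p) x := by rw [hb y x p]; abel
      rw [e]
      exact L.add_mem (hL y hyL _ (hx p hp).1) (hx (b y p) h2).2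
    · rw [hb p y x]
      exact L.sub_mem (hx (b p y) h1).2 (hL _ (hx p hp).2 y hyL)

lemma absorbed_subset_Lcolon {b : Q →ₗ[F] Q →ₗ[F] Q} (hb : IsRightLeibniz b)
    {L : Submodule F Q} (hL : IsSubalgebraOf b L) {q : Q}
    {I : Submodule F Q} (hI : IsIdealOf b L I) (hq : ∀ x ∈ I, b x q ∈ L ∧ b q x ∈ L) :
    (I : Set Q) ⊆ LcolonSet b L q := by
  set S : Submodule F Q :=
    { carrier := {p : Q | ∀ x ∈ I, b x p ∈ L ∧ b p x ∈ L}
      zero_mem' := fun x _ => by simp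
      add_mem' := by
        intro p r hp hr x hx
        obtain ⟨h1, h2⟩ := hp x hx
        obtain ⟨h3, h4⟩ := hr x hx
        constructor
        · have e : b x (p + r) = b x p + b x r := by simp
          rw [e]; exact L.add_mem h1 h3
        · have e : b (p + r) x = b p x + b r x := by simp
          rw [e]; exact L.add_mem h2 h4
      smul_mem' := by
        intro c p hp x hx
        obtain ⟨h1, h2⟩ := hp x hx
        constructor
        · have e : b x (c • p) = c • b x p := by simp
          rw [e]; exact L.smul_mem c h1
        · have e : b (c • p) x = c • b p x := by simp
          rw [e]; exact L.smul_mem c h2 } with hS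
  have step : ∀ p ∈ S, ∀ y ∈ L, b p y ∈ S ∧ b y p ∈ S := by
    intro p hp y hy
    constructor
    · intro x hx
      obtain ⟨hxy, hyx⟩ := hI.2 x hx y hy
      constructor
      · rw [hb x p y]
        exact L.sub_mem (hL _ (hp x hx).1 y hy) (hp (b x y) hxy).1
      · have e : b (b p y) x = b p (b y x) + b (b p x) y := by rw [hb p y x]; abel
        rw [e]
        exact L.add_mem (hp (b y x) hyx).2 (hL _ (hp x hx).2 y hy)
    · intro x hx
      obtain ⟨hxy, hyx⟩ := hI.2 x hx y hy
      constructor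
      · rw [hb x y p]
        exact L.sub_mem (hp (b x y) hxy).1 (hL _ (hp x hx).1 y hy)
      · have e : b (b y p) x = b y (b p x) + b (b y x) p := by rw [hb y p x]; abel
        rw [e]
        exact L.add_mem (hL y hy _ (hp x hx).2) (hp (b y x) hyx).1
  have hqS : q ∈ S := fun x hx => hq x hx
  have H : ∀ ξ ∈ Algebra.adjoin F (mulOps b (L : Set Q)), ∀ p ∈ S, ξ p ∈ S := by
    intro ξ hξ
    induction hξ using Algebra.adjoin_induction with
    | mem f hf =>
      obtain ⟨y, hy, hf | hf⟩ := hf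
      · intro p hp
        rw [hf]
        exact (step p hp y hy).1
      · intro p hp
        rw [hf]
        exact (step p hp y hy).2
    | algebraMap r =>
      intro p hp
      have e : (algebraMap F (Module.End F Q) r) p = r • p := by
        simp [Algebra.algebraMap_eq_smul_one]
      rw [e]
      exact S.smul_mem r hp
    | add ξ₁ ξ₂ _ _ h1 h2 =>
      intro p hp
      have e : (ξ₁ + ξ₂) p = ξ₁ p + ξ₂ p := rfl
      rw [e]
      exact S.add_mem (h1 p hp) (h2 p hp)
    | mul ξ₁ ξ₂ _ _ h1 h2 =>
      intro p hp
      have e : (ξ₁ * ξ₂) p = ξ₁ (ξ₂ p) := rfl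
      rw [e]
      exact h1 _ (h2 p hp)
  intro x hx
  refine ⟨hI.1 hx, fun p hp => ?_⟩
  obtain ⟨ξ, hξ, rfl⟩ := hp
  have : ξ q ∈ S := H ξ hξ q hqS
  exact this x hx

lemma annIn_L_eq {b : Q →ₗ[F] Q →ₗ[F] Q} {L : Submodule F Q}
    (ha : IsIdeallyAbsorbed b L) : annIn b L (L : Set Q) = {0} := by
  ext x
  simp only [Set.mem_singleton_iff]
  constructor
  · rintro ⟨⟨hxL, hl⟩, _, hr⟩
    by_contra hx
    obtain ⟨I, hI, _, hne, _⟩ := ha x hx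
    rcases hne with ⟨z, hz, h⟩ | ⟨z, hz, h⟩
    · exact h (hr z (hI.1 hz))
    · exact h (hl z (hI.1 hz))
  · rintro rfl
    exact ⟨⟨L.zero_mem, fun s _ => by simp⟩, L.zero_mem, fun s _ => by simp⟩

end Aux

/-- If `Q` is ideally absorbed into its subalgebra `L`, then for every
`q ∈ Q`, `(L : q)` is an essential ideal of `L` and `Ann_L((L : q)) = {0}`. -/
theorem Lcolon_essential_of_ideallyAbsorbed {F : Type*} [Field F] {Q : Type*}
    [AddCommGroup Q] [Module F Q] (b : Q →ₗ[F] Q →ₗ[F] Q) (hb : IsRightLeibniz b)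
    (L : Submodule F Q) (hL : IsSubalgebraOf b L)
    (ha : IsIdeallyAbsorbed b L) (q : Q) :
    ∃ I : Submodule F Q, (I : Set Q) = LcolonSet b L q ∧
      IsEssentialIdealOf b L I ∧ annIn b L (LcolonSet b L q) = {0} := by
  obtain ⟨K, hK, hKann, hKsub⟩ : ∃ K : Submodule F Q, IsIdealOf b L K ∧
      annIn b L (K : Set Q) = {0} ∧ (K : Set Q) ⊆ LcolonSet b L q := by
    by_cases hq : q = 0
    · subst hq
      refine ⟨L, ⟨le_rfl, fun x hx y hy => ⟨hL x hx y hy, hL y hy x hx⟩⟩, annIn_L_eq ha, ?_⟩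
      intro x hx
      refine ⟨hx, fun p hp => ?_⟩
      obtain ⟨ξ, _, rfl⟩ := hp
      constructor <;> simp
    · obtain ⟨I, hI, hann, _, habs⟩ := ha q hq
      exact ⟨I, hI, hann, absorbed_subset_Lcolon hb hL hI habs⟩
  have hannK : annIn b L (LcolonSet b L q) = {0} := by
    apply Set.eq_singleton_iff_unique_mem.mpr
    constructor
    · exact ⟨⟨L.zero_mem, fun s _ => by simp⟩, L.zero_mem, fun s _ => by simp⟩
    · intro x hx
      have hx' : x ∈ annIn b L (K : Set Q) := by
        obtain ⟨⟨hxL, hl⟩, _, hr⟩ := hx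
        exact ⟨⟨hxL, fun s hs => hl s (hKsub hs)⟩, hxL, fun s hs => hr s (hKsub hs)⟩
      rw [hKann] at hx'
      exact hx'
  refine ⟨LcolonSub b L q, rfl, ⟨Lcolon_isIdealOf hb hL q, ?_⟩, hannK⟩
  intro J hJ hJne heq
  obtain ⟨y, hyJ, hy0⟩ := Submodule.ne_bot_iff J |>.mp hJne
  have hyL : y ∈ L := hJ.1 hyJ
  have hym : y ∈ annIn b L (K : Set Q) := by
    refine ⟨⟨hyL, fun s hs => ?_⟩, hyL, fun s hs => ?_⟩
    · have hmem : b y s ∈ LcolonSub b L q ⊓ J :=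
        ⟨hKsub (hK.2 s hs y hyL).2, (hJ.2 y hyJ s (hK.1 hs)).1⟩
      rw [heq] at hmem
      exact hmem
    · have hmem : b s y ∈ LcolonSub b L q ⊓ J :=
        ⟨hKsub (hK.2 s hs y hyL).1, (hJ.2 y hyJ s (hK.1 hs)).2⟩
      rw [heq] at hmem
      exact hmem
  rw [hKann] at hym
  exact hy0 hym


end LeibnizQuot
end

section
/- Let L be a subalgebra of a (right) Leibniz algebra Q over a field F such that Q is a weak algebra of quotients of L, and let I be an ideal of L. If Ann_L(I) = {0}, then Ann_Q(I) = {0}; and if ran_L(I) = {0}, then ran_Q(I) = {0}. Here Ann_Q(I) = {q ∈ Q : [q,x] = 0 and [x,q] = 0 for all x ∈ I} and ran_Q(I) = {q ∈ Q : [x,q] = 0 for all x ∈ I}. -/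
namespace LeibnizQuot

variable {F : Type*} [Field F] {Q : Type*} [AddCommGroup Q] [Module F Q]

/-- If `Q` is a weak algebra of quotients of its subalgebra `L` and `I` is
an ideal of `L`, then `Ann_L(I) = {0}` implies `Ann_Q(I) = {0}`, and `ran_L(I) = {0}`
implies `ran_Q(I) = {0}`. -/
theorem ann_lift_of_weakQuotients {F : Type*} [Field F] {Q : Type*} [AddCommGroup Q]
    [Module F Q] (b : Q →ₗ[F] Q →ₗ[F] Q) (hb : IsRightLeibniz b)
    (L : Submodule F Q) (hL : IsSubalgebraOf b L)
    (hw : IsWeakAlgebraOfQuotients b L)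
    (I : Submodule F Q) (hI : IsIdealOf b L I) :
    (annIn b L (I : Set Q) = {0} →
      {q : Q | ∀ x ∈ I, b q x = 0 ∧ b x q = 0} = {0}) ∧
    (ranIn b L (I : Set Q) = {0} →
      {q : Q | ∀ x ∈ I, b x q = 0} = {0}) := by
  obtain ⟨hIL, hid⟩ := hI
  constructor
  · intro hann
    ext q
    simp only [Set.mem_setOf_eq, Set.mem_singleton_iff]
    constructor
    · intro hq
      by_contra hq0
      rcases hw q hq0 with ⟨x, hxL, hne, hmem⟩ | ⟨y, hyL, hne, hmem⟩
      · have hz : b q x ∈ annIn b L (I : Set Q) := by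
          refine ⟨⟨hmem, fun i hi => ?_⟩, hmem, fun i hi => ?_⟩
          · have h := hb q x i
            rw [(hq _ ((hid i hi x hxL).2)).1, (hq i hi).1] at h
            simpa using h.symm
          · have h := hb i q x
            rw [(hq i hi).2, (hq _ ((hid i hi x hxL).1)).2] at h
            simpa using h
        rw [hann] at hz
        exact hne hz
      · have hz : b y q ∈ annIn b L (I : Set Q) := by
          refine ⟨⟨hmem, fun i hi => ?_⟩, hmem, fun i hi => ?_⟩
          · have h := hb y q i
            rw [(hq i hi).1, (hq _ ((hid i hi y hyL).2)).2] at h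
            simpa using h.symm
          · have h := hb i y q
            rw [(hq i hi).2, (hq _ ((hid i hi y hyL).1)).2] at h
            simpa using h
        rw [hann] at hz
        exact hne hz
    · rintro rfl
      intro x _
      simp
  · intro hran
    ext q
    simp only [Set.mem_setOf_eq, Set.mem_singleton_iff]
    constructor
    · intro hq
      by_contra hq0
      rcases hw q hq0 with ⟨x, hxL, hne, hmem⟩ | ⟨y, hyL, hne, hmem⟩
      · have hz : b q x ∈ ranIn b L (I : Set Q) := by
          refine ⟨hmem, fun i hi => ?_⟩
          have h := hb i q x
          rw [hq i hi, hq _ ((hid i hi x hxL).1)] at h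
          simpa using h
        rw [hran] at hz
        exact hne hz
      · have hz : b y q ∈ ranIn b L (I : Set Q) := by
          refine ⟨hmem, fun i hi => ?_⟩
          have h := hb i y q
          rw [hq i hi, hq _ ((hid i hi y hyL).1)] at h
          simpa using h
        rw [hran] at hz
        exact hne hz
    · rintro rfl
      intro x _
      simp

end LeibnizQuot
end

section
/- Let L be a subalgebra of a symmetric Leibniz algebra Q over a field F such that Q is a weak algebra of quotients of L, and let I be an ideal of L with Ann_L(I) = {0}. Then ran_{A(Q)}(A_Q(I)) = {0}, i.e., the only endomorphism μ ∈ A(Q) with λμ = 0 for all λ ∈ A_Q(I) is μ = 0. -/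
namespace LeibnizQuot

variable {F : Type*} [Field F] {Q : Type*} [AddCommGroup Q] [Module F Q]

/-- Let `L` be a subalgebra of a symmetric Leibniz algebra `Q` such that
`Q` is a weak algebra of quotients of `L`, and let `I` be an ideal of `L` with
`Ann_L(I) = {0}`. Then `ran_{A(Q)}(A_Q(I)) = {0}`. -/
theorem ran_AQ_eq_bot {F : Type*} [Field F] {Q : Type*} [AddCommGroup Q] [Module F Q]
    (b : Q →ₗ[F] Q →ₗ[F] Q) (hbr : IsRightLeibniz b) (hbl : IsLeftLeibniz b)
    (L : Submodule F Q) (hL : IsSubalgebraOf b L)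
    (hw : IsWeakAlgebraOfQuotients b L)
    (I : Submodule F Q) (hI : IsIdealOf b L I)
    (hann : annIn b L (I : Set Q) = {0}) :
    ∀ μ ∈ NonUnitalAlgebra.adjoin F (mulOps b (Set.univ : Set Q)),
      (∀ l ∈ NonUnitalAlgebra.adjoin F (mulOps b (I : Set Q)), l * μ = 0) → μ = 0 := by
  intro μ _hμ hl
  -- every value of μ annihilates I on both sides
  have key : ∀ p : Q, ∀ x ∈ I, b (μ p) x = 0 ∧ b x (μ p) = 0 := by
    intro p x hx
    have h1 : (b.flip x) * μ = 0 :=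
      hl _ (NonUnitalAlgebra.subset_adjoin F ⟨x, hx, Or.inl rfl⟩)
    have h2 : (b x) * μ = 0 :=
      hl _ (NonUnitalAlgebra.subset_adjoin F ⟨x, hx, Or.inr rfl⟩)
    constructor
    · have := LinearMap.ext_iff.mp h1 p
      simpa [Module.End.mul_apply] using this
    · have := LinearMap.ext_iff.mp h2 p
      simpa [Module.End.mul_apply] using this
  ext p
  simp only [LinearMap.zero_apply]
  by_contra hne
  set q := μ p with hq
  rcases hw q hne with ⟨x, hxL, hr0, hrL⟩ | ⟨y, hyL, hr0, hrL⟩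
  · -- r = [q,x] ∈ Ann_L(I)
    set r := b q x with hrdef
    have hmem : r ∈ annIn b L (I : Set Q) := by
      refine ⟨⟨hrL, ?_⟩, ⟨hrL, ?_⟩⟩
      · intro s hs
        have hxs : b x s ∈ I := (hI.2 s hs x hxL).2
        have h1 : b q (b x s) = 0 := (key p _ hxs).1
        have h2 : b q s = 0 := (key p s hs).1
        have := hbl q x s
        rw [h1, h2, map_zero] at this
        simpa using this.symm
      · intro s hs
        have hsx : b s x ∈ I := (hI.2 s hs x hxL).1
        have h1 : b (b s x) q = 0 := (key p _ hsx).2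
        have h2 : b s q = 0 := (key p s hs).2
        have := hbr s q x
        rw [h1, h2] at this
        simpa using this
    rw [hann] at hmem
    exact hr0 hmem
  · -- r = [y,q] ∈ Ann_L(I)
    set r := b y q with hrdef
    have hmem : r ∈ annIn b L (I : Set Q) := by
      refine ⟨⟨hrL, ?_⟩, ⟨hrL, ?_⟩⟩
      · intro s hs
        have hys : b y s ∈ I := (hI.2 s hs y hyL).2
        have h1 : b q (b y s) = 0 := (key p _ hys).1
        have h2 : b q s = 0 := (key p s hs).1
        have := hbl y q s
        rw [h1, h2, map_zero] at this
        simpa using this.symm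
      · intro s hs
        have hsy : b s y ∈ I := (hI.2 s hs y hyL).1
        have h1 : b (b s y) q = 0 := (key p _ hsy).2
        have h2 : b s q = 0 := (key p s hs).2
        have := hbr s y q
        rw [h1, h2] at this
        simpa using this
    rw [hann] at hmem
    exact hr0 hmem

end LeibnizQuot
end

section
/- Let L be a semiprime symmetric Leibniz algebra over a field F which is a subalgebra of a symmetric Leibniz algebra Q, and suppose Q is an algebra of quotients of L. Let A(Q) be the associative subalgebra of End_F(Q) generated by the right and left multiplication operators of Q, and let A_0 = {μ ∈ A(Q) : μ(L) ⊆ L}. Then A(Q) is a left quotient algebra of A_0, i.e., for all p, q ∈ A(Q) with p ≠ 0 there exists x ∈ A_0 such that xp ≠ 0 and xq ∈ A_0. -/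
/-!
For an ideal `K` of `L`, the commutator of a multiplication operator by an element of `K` with
one by an element of `L` is again a multiplication operator by an element of `K`, and with one
by `v` it is a multiplication operator by an element of `L` as soon as `K ⊆ (L : v)`. So if
`level K n` is the set of elements sent into `L` by all products of `n` operators from `K`,
multiplication by `L` preserves levels and multiplication by such `v` raises them by one. An
element `q ∈ A(Q)` involves only finitely many `v`, hence raises levels by at most some `k` once
`K` lies in all their colon ideals. Semiprimeness gives the intersection `K` of these colon
ideals zero annihilator in `L`, and then the quotient property makes `K` act faithfully on `Q`:
a product `x` of `k + 1` operators from `K` with `x * p ≠ 0` does the job.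
-/

namespace LeibnizQuot

variable {F : Type*} [Field F] {Q : Type*} [AddCommGroup Q] [Module F Q]

section LeftQuotient

variable {b : Q →ₗ[F] Q →ₗ[F] Q} {L : Submodule F Q}

/-- `⁅L_c, S_z⁆ = S_[c,z]` and `⁅R_c, S_z⁆ = S_[z,c]` for `S` either of `L`, `R`. -/
lemma lie_mem_mulOps (hbr : IsRightLeibniz b) (hbl : IsLeftLeibniz b) {C Z W : Set Q}
    (hCZ : ∀ c ∈ C, ∀ z ∈ Z, b c z ∈ W ∧ b z c ∈ W) {T S : Module.End F Q}
    (hT : T ∈ mulOps b C) (hS : S ∈ mulOps b Z) : ⁅T, S⁆ ∈ mulOps b W := by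
  obtain ⟨c, hc, rfl | rfl⟩ := hT <;> obtain ⟨z, hz, rfl | rfl⟩ := hS
  · refine ⟨b z c, (hCZ c hc z hz).2, Or.inl (LinearMap.ext fun p => ?_)⟩
    simp [Ring.lie_def, hbr p z c]
  · refine ⟨b z c, (hCZ c hc z hz).2, Or.inr (LinearMap.ext fun p => ?_)⟩
    simp [Ring.lie_def, hbr z p c]
  · refine ⟨b c z, (hCZ c hc z hz).1, Or.inl (LinearMap.ext fun p => ?_)⟩
    simp [Ring.lie_def, hbl c p z]
  · refine ⟨b c z, (hCZ c hc z hz).1, Or.inr (LinearMap.ext fun p => ?_)⟩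
    simp [Ring.lie_def, hbl c z p]

lemma apply_apply_eq_add_lie (T S : Module.End F Q) (m : Q) :
    T (S m) = S (T m) + ⁅T, S⁆ m := by
  simp [Ring.lie_def]

lemma mulOps_mono {S S' : Set Q} (h : S ⊆ S') : mulOps b S ⊆ mulOps b S' :=
  fun _ ⟨x, hx, hT⟩ => ⟨x, h hx, hT⟩

lemma IsIdealOf.apply_mem {I : Submodule F Q} (hI : IsIdealOf b L I) {T : Module.End F Q}
    (hT : T ∈ mulOps b I) {x : Q} (hx : x ∈ L) : T x ∈ I := by
  obtain ⟨a, ha, rfl | rfl⟩ := hT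
  · exact (hI.2 a ha x hx).2
  · exact (hI.2 a ha x hx).1

lemma IsIdealOf.apply_mem_of_mem {I : Submodule F Q} (hI : IsIdealOf b L I)
    {S : Module.End F Q} (hS : S ∈ mulOps b L) {x : Q} (hx : x ∈ I) : S x ∈ I := by
  obtain ⟨y, hy, rfl | rfl⟩ := hS
  · exact (hI.2 x hx y hy).1
  · exact (hI.2 x hx y hy).2

lemma isIdealOf_self (hL : IsSubalgebraOf b L) : IsIdealOf b L L :=
  ⟨le_rfl, fun x hx y hy => ⟨hL x hx y hy, hL y hy x hx⟩⟩

lemma IsIdealOf.inf {I J : Submodule F Q} (hI : IsIdealOf b L I) (hJ : IsIdealOf b L J) :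
    IsIdealOf b L (I ⊓ J) :=
  ⟨inf_le_left.trans hI.1, fun x hx y hy =>
    ⟨⟨(hI.2 x hx.1 y hy).1, (hJ.2 x hx.2 y hy).1⟩, ⟨(hI.2 x hx.1 y hy).2, (hJ.2 x hx.2 y hy).2⟩⟩⟩

lemma IsIdealOf.lie_mem_mulOps (hbr : IsRightLeibniz b) (hbl : IsLeftLeibniz b)
    {I : Submodule F Q} (hI : IsIdealOf b L I) {T S : Module.End F Q}
    (hT : T ∈ mulOps b I) (hS : S ∈ mulOps b L) : ⁅T, S⁆ ∈ mulOps b I :=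
  LeibnizQuot.lie_mem_mulOps hbr hbl hI.2 hT hS

variable (b L)

/-- `(L : v)` as a submodule of `Q`. -/
def colon (v : Q) : Submodule F Q where
  carrier := LcolonSet b L v
  add_mem' := fun ⟨hxL, hx⟩ ⟨hyL, hy⟩ => ⟨add_mem hxL hyL, fun p hp => by
    simpa using ⟨add_mem (hx p hp).1 (hy p hp).1, add_mem (hx p hp).2 (hy p hp).2⟩⟩
  zero_mem' := ⟨zero_mem L, fun p _ => by simp⟩
  smul_mem' := fun c x ⟨hxL, hx⟩ => ⟨L.smul_mem c hxL, fun p hp => by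
    simpa using ⟨L.smul_mem c (hx p hp).1, L.smul_mem c (hx p hp).2⟩⟩

def annihilator (I : Submodule F Q) : Submodule F Q where
  carrier := {x | x ∈ L ∧ ∀ T ∈ mulOps b I, T x = 0}
  add_mem' := fun ⟨hxL, hx⟩ ⟨hyL, hy⟩ =>
    ⟨add_mem hxL hyL, fun T hT => by rw [map_add, hx T hT, hy T hT, add_zero]⟩
  zero_mem' := ⟨zero_mem L, fun T _ => map_zero T⟩
  smul_mem' := fun c x ⟨hxL, hx⟩ =>
    ⟨L.smul_mem c hxL, fun T hT => by rw [map_smul, hx T hT, smul_zero]⟩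

variable {b L}

lemma self_mem_LqSet (v : Q) : v ∈ LqSet b L v :=
  ⟨1, one_mem _, rfl⟩

lemma apply_mem_LqSet {v m : Q} {S : Module.End F Q} (hS : S ∈ mulOps b L)
    (hm : m ∈ LqSet b L v) : S m ∈ LqSet b L v := by
  obtain ⟨ξ, hξ, rfl⟩ := hm
  exact ⟨S * ξ, mul_mem (Algebra.subset_adjoin hS) hξ, rfl⟩

lemma mulOps_singleton_apply_mem_LqSet {v : Q} {S : Module.End F Q} (hS : S ∈ mulOps b {v})
    {l : Q} (hl : l ∈ L) : S l ∈ LqSet b L v := by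
  obtain ⟨_, rfl, rfl | rfl⟩ := hS
  · exact ⟨b l, Algebra.subset_adjoin ⟨l, hl, Or.inr rfl⟩, rfl⟩
  · exact ⟨b.flip l, Algebra.subset_adjoin ⟨l, hl, Or.inl rfl⟩, rfl⟩

lemma apply_mem_of_mem_colon {v x : Q} (hx : x ∈ colon b L v) {T : Module.End F Q}
    (hT : T ∈ mulOps b {x}) {m : Q} (hm : m ∈ LqSet b L v) : T m ∈ L := by
  obtain ⟨_, rfl, rfl | rfl⟩ := hT
  · exact (hx.2 m hm).2
  · exact (hx.2 m hm).1

lemma isIdealOf_colon (hbr : IsRightLeibniz b) (hL : IsSubalgebraOf b L) (v : Q) :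
    IsIdealOf b L (colon b L v) := by
  refine ⟨fun x hx => hx.1, fun x ⟨hxL, hx⟩ y hy => ⟨⟨hL x hxL y hy, fun p hp => ⟨?_, ?_⟩⟩,
    ⟨hL y hy x hxL, fun p hp => ⟨?_, ?_⟩⟩⟩⟩
  · rw [show b (b x y) p = b x (b y p) + b (b x p) y by rw [hbr]; abel]
    exact add_mem (hx _ (apply_mem_LqSet ⟨y, hy, Or.inr rfl⟩ hp)).1 (hL _ (hx p hp).1 y hy)
  · rw [hbr p x y]
    exact sub_mem (hL _ (hx p hp).2 y hy) (hx _ (apply_mem_LqSet ⟨y, hy, Or.inl rfl⟩ hp)).2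
  · rw [show b (b y x) p = b y (b x p) + b (b y p) x by rw [hbr]; abel]
    exact add_mem (hL y hy _ (hx p hp).1) (hx _ (apply_mem_LqSet ⟨y, hy, Or.inr rfl⟩ hp)).2
  · rw [hbr p y x]
    exact sub_mem (hx _ (apply_mem_LqSet ⟨y, hy, Or.inl rfl⟩ hp)).2 (hL _ (hx p hp).2 y hy)

lemma apply_mem_annihilator (hbr : IsRightLeibniz b) (hbl : IsLeftLeibniz b)
    {I : Submodule F Q} (hI : IsIdealOf b L I) {S : Module.End F Q} (hS : S ∈ mulOps b L)
    {x : Q} (hx : ∀ T ∈ mulOps b I, T x = 0) (T : Module.End F Q) (hT : T ∈ mulOps b I) :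
    T (S x) = 0 := by
  rw [apply_apply_eq_add_lie, hx T hT, map_zero, zero_add,
    hx _ (hI.lie_mem_mulOps hbr hbl hT hS)]

lemma isIdealOf_annihilator (hbr : IsRightLeibniz b) (hbl : IsLeftLeibniz b)
    (hL : IsSubalgebraOf b L) {I : Submodule F Q} (hI : IsIdealOf b L I) :
    IsIdealOf b L (annihilator b L I) := by
  refine ⟨fun x hx => hx.1, fun x ⟨hxL, hx⟩ y hy => ⟨⟨hL x hxL y hy, ?_⟩, ⟨hL y hy x hxL, ?_⟩⟩⟩
  · exact apply_mem_annihilator hbr hbl hI (S := b.flip y) ⟨y, hy, Or.inl rfl⟩ hx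
  · exact apply_mem_annihilator hbr hbl hI (S := b y) ⟨y, hy, Or.inr rfl⟩ hx

lemma le_annihilator_of_inf_eq_bot {A I : Submodule F Q} (hA : IsIdealOf b L A)
    (hI : IsIdealOf b L I) (h : A ⊓ I = ⊥) : A ≤ annihilator b L I := fun x hx =>
  ⟨hA.1 hx, fun T hT => by
    simpa [h] using Submodule.mem_inf.2 ⟨hA.apply_mem_of_mem (mulOps_mono hI.1 hT) hx,
      hI.apply_mem hT (hA.1 hx)⟩⟩

lemma inf_eq_bot_of_le_annihilator (hsp : IsSemiprimeSub b L) {A I : Submodule F Q}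
    (hA : IsIdealOf b L A) (hI : IsIdealOf b L I) (h : A ≤ annihilator b L I) : A ⊓ I = ⊥ := by
  by_contra hne
  obtain ⟨x, hx, y, hy, hxy⟩ := hsp _ (hA.inf hI) hne
  exact hxy ((h hx.1).2 (b.flip y) ⟨y, hy.2, Or.inl rfl⟩)

lemma annihilator_self_eq_bot (hsp : IsSemiprimeSub b L) (hbr : IsRightLeibniz b)
    (hbl : IsLeftLeibniz b) (hL : IsSubalgebraOf b L) : annihilator b L L = ⊥ := by
  have hA := isIdealOf_annihilator hbr hbl hL (isIdealOf_self hL)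
  simpa [inf_eq_left.2 hA.1] using
    inf_eq_bot_of_le_annihilator hsp hA (isIdealOf_self hL) le_rfl

lemma annihilator_inf_eq_bot (hsp : IsSemiprimeSub b L) (hbr : IsRightLeibniz b)
    (hbl : IsLeftLeibniz b) (hL : IsSubalgebraOf b L) {I J : Submodule F Q}
    (hI : IsIdealOf b L I) (hJ : IsIdealOf b L J) (hIa : annihilator b L I = ⊥)
    (hJa : annihilator b L J = ⊥) : annihilator b L (I ⊓ J) = ⊥ := by
  set A := annihilator b L (I ⊓ J)
  have hA : IsIdealOf b L A := isIdealOf_annihilator hbr hbl hL (hI.inf hJ)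
  have hAIJ : A ⊓ I ⊓ J = ⊥ := by
    rw [inf_assoc]; exact inf_eq_bot_of_le_annihilator hsp hA (hI.inf hJ) le_rfl
  have hAI : A ⊓ I = ⊥ := le_bot_iff.1 (hJa ▸ le_annihilator_of_inf_eq_bot (hA.inf hI) hJ hAIJ)
  exact le_bot_iff.1 (hIa ▸ le_annihilator_of_inf_eq_bot hA hI hAI)

lemma annihilator_colon_eq_bot (hq : IsAlgebraOfQuotients b L) (v : Q) :
    annihilator b L (colon b L v) = ⊥ := by
  refine (Submodule.eq_bot_iff _).2 fun x ⟨_, hx⟩ => by_contra fun hx0 => ?_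
  rcases hq x v hx0 with ⟨y, hy, hne⟩ | ⟨y, hy, hne⟩
  · exact hne (hx (b y) ⟨y, hy, Or.inr rfl⟩)
  · exact hne (hx (b.flip y) ⟨y, hy, Or.inl rfl⟩)

lemma exists_ideal_le_colon (hsp : IsSemiprimeSub b L) (hbr : IsRightLeibniz b)
    (hbl : IsLeftLeibniz b) (hL : IsSubalgebraOf b L) (hq : IsAlgebraOfQuotients b L)
    (V : Finset Q) : ∃ K : Submodule F Q, IsIdealOf b L K ∧ annihilator b L K = ⊥ ∧
      ∀ v ∈ V, K ≤ colon b L v := by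
  classical
  induction V using Finset.induction_on with
  | empty => exact ⟨L, isIdealOf_self hL, annihilator_self_eq_bot hsp hbr hbl hL, by simp⟩
  | insert a V _ ih =>
    obtain ⟨K, hK, hKa, hKV⟩ := ih
    refine ⟨colon b L a ⊓ K, (isIdealOf_colon hbr hL a).inf hK,
      annihilator_inf_eq_bot hsp hbr hbl hL (isIdealOf_colon hbr hL a) hK
        (annihilator_colon_eq_bot hq a) hKa, ?_⟩
    simp only [Finset.mem_insert, forall_eq_or_imp]
    exact ⟨inf_le_left, fun v hv => inf_le_right.trans (hKV v hv)⟩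

/-- If `w` were killed by `K`, so would be the nonzero element `[y,w]` or `[w,y]` of `L` given by
the quotient property, which lies in the annihilator of `K`. -/
lemma exists_mulOps_apply_ne_zero (hbr : IsRightLeibniz b) (hbl : IsLeftLeibniz b)
    (hq : IsAlgebraOfQuotients b L) {K : Submodule F Q} (hK : IsIdealOf b L K)
    (hKa : annihilator b L K = ⊥) {w : Q} (hw : w ≠ 0) : ∃ T ∈ mulOps b K, T w ≠ 0 := by
  by_contra! hKw
  obtain ⟨S, hSL, hSw, hSwL⟩ : ∃ S ∈ mulOps b L, S w ≠ 0 ∧ S w ∈ L := by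
    rcases hq w w hw with ⟨y, hy, hne⟩ | ⟨y, hy, hne⟩
    · exact ⟨b y, ⟨y, hy.1, Or.inr rfl⟩, hne, (hy.2 w (self_mem_LqSet w)).1⟩
    · exact ⟨b.flip y, ⟨y, hy.1, Or.inl rfl⟩, hne, (hy.2 w (self_mem_LqSet w)).2⟩
  have hSwa : S w ∈ annihilator b L K := ⟨hSwL, apply_mem_annihilator hbr hbl hK hSL hKw⟩
  exact hSw (by simpa [hKa] using hSwa)

variable (b L) in
/-- `level b L K n` consists of the elements sent into `L` by every product of `n`
multiplication operators by elements of `K`. -/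
def level (K : Submodule F Q) : ℕ → Submodule F Q
  | 0 => L
  | n + 1 => ⨅ T ∈ mulOps b K, (level K n).comap T

lemma mem_level_succ {K : Submodule F Q} {n : ℕ} {m : Q} :
    m ∈ level b L K (n + 1) ↔ ∀ T ∈ mulOps b K, T m ∈ level b L K n := by
  simp [level]

lemma apply_mem_level (hbr : IsRightLeibniz b) (hbl : IsLeftLeibniz b)
    (hL : IsSubalgebraOf b L) {K : Submodule F Q} (hK : IsIdealOf b L K)
    {S : Module.End F Q} (hS : S ∈ mulOps b L) :
    ∀ {n : ℕ} {m : Q}, m ∈ level b L K n → S m ∈ level b L K n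
  | 0, _, hm => (isIdealOf_self hL).apply_mem_of_mem hS hm
  | n + 1, m, hm => mem_level_succ.2 fun T hT => by
    rw [apply_apply_eq_add_lie]
    exact add_mem (apply_mem_level hbr hbl hL hK hS (mem_level_succ.1 hm T hT))
      (mem_level_succ.1 hm _ (hK.lie_mem_mulOps hbr hbl hT hS))

lemma level_mono (hbr : IsRightLeibniz b) (hbl : IsLeftLeibniz b)
    (hL : IsSubalgebraOf b L) {K : Submodule F Q} (hK : IsIdealOf b L K) :
    Monotone (level b L K) :=
  monotone_nat_of_le_succ fun _ _ hm => mem_level_succ.2 fun _ hT =>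
    apply_mem_level hbr hbl hL hK (mulOps_mono hK.1 hT) hm

lemma apply_mem_level_succ (hbr : IsRightLeibniz b) (hbl : IsLeftLeibniz b)
    (hL : IsSubalgebraOf b L) {K : Submodule F Q} (hK : IsIdealOf b L K) {v : Q}
    (hKv : K ≤ colon b L v) {S : Module.End F Q} (hS : S ∈ mulOps b {v}) :
    ∀ {n : ℕ} {m : Q}, m ∈ level b L K n → S m ∈ level b L K (n + 1)
  | 0, _, hm => mem_level_succ.2 fun T ⟨c, hc, hT⟩ =>
    apply_mem_of_mem_colon (hKv hc) ⟨c, rfl, hT⟩ (mulOps_singleton_apply_mem_LqSet hS hm)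
  | n + 1, m, hm => mem_level_succ.2 fun T hT => by
    have hTS : ⁅T, S⁆ ∈ mulOps b L := LeibnizQuot.lie_mem_mulOps hbr hbl
      (fun c hc z hz => by
        rw [Set.mem_singleton_iff.1 hz]
        exact ⟨apply_mem_of_mem_colon (hKv hc) ⟨c, rfl, Or.inr rfl⟩ (self_mem_LqSet v),
          apply_mem_of_mem_colon (hKv hc) ⟨c, rfl, Or.inl rfl⟩ (self_mem_LqSet v)⟩) hT hS
    rw [apply_apply_eq_add_lie]
    exact add_mem (apply_mem_level_succ hbr hbl hL hK hKv hS (mem_level_succ.1 hm T hT))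
      (apply_mem_level hbr hbl hL hK hTS hm)

lemma exists_finset_apply_mem_level_add (hbr : IsRightLeibniz b) (hbl : IsLeftLeibniz b)
    (hL : IsSubalgebraOf b L) {μ : Module.End F Q}
    (hμ : μ ∈ NonUnitalAlgebra.adjoin F (mulOps b Set.univ)) :
    ∃ (V : Finset Q) (k : ℕ), ∀ K : Submodule F Q, IsIdealOf b L K →
      (∀ v ∈ V, K ≤ colon b L v) → ∀ n, ∀ m ∈ level b L K n, μ m ∈ level b L K (n + k) := by
  classical
  induction hμ using NonUnitalAlgebra.adjoin_induction with
  | mem T hT =>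
    obtain ⟨v, -, hTv⟩ := hT
    exact ⟨{v}, 1, fun K hK hKV n m hm => apply_mem_level_succ hbr hbl hL hK
      (hKV v (Finset.mem_singleton_self v)) ⟨v, rfl, hTv⟩ hm⟩
  | add μ ν _ _ ihμ ihν =>
    obtain ⟨V, k, hμ⟩ := ihμ
    obtain ⟨W, j, hν⟩ := ihν
    refine ⟨V ∪ W, max k j, fun K hK hKVW n m hm => add_mem ?_ ?_⟩
    · exact level_mono hbr hbl hL hK (by omega)
        (hμ K hK (fun v hv => hKVW v (Finset.mem_union_left W hv)) n m hm)
    · exact level_mono hbr hbl hL hK (by omega)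
        (hν K hK (fun v hv => hKVW v (Finset.mem_union_right V hv)) n m hm)
  | zero => exact ⟨∅, 0, fun _ _ _ _ _ _ => zero_mem _⟩
  | mul μ ν _ _ ihμ ihν =>
    obtain ⟨V, k, hμ⟩ := ihμ
    obtain ⟨W, j, hν⟩ := ihν
    refine ⟨V ∪ W, j + k, fun K hK hKVW n m hm => ?_⟩
    rw [← add_assoc]
    exact hμ K hK (fun v hv => hKVW v (Finset.mem_union_left W hv)) _ _
      (hν K hK (fun v hv => hKVW v (Finset.mem_union_right V hv)) n m hm)
  | smul r μ _ ih =>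
    obtain ⟨V, k, hμ⟩ := ih
    exact ⟨V, k, fun K hK hKV n m hm => Submodule.smul_mem _ r (hμ K hK hKV n m hm)⟩

lemma exists_mem_adjoin_mul_ne_zero (hbr : IsRightLeibniz b) (hbl : IsLeftLeibniz b)
    (hq : IsAlgebraOfQuotients b L) {K : Submodule F Q} (hK : IsIdealOf b L K)
    (hKa : annihilator b L K = ⊥) (n : ℕ) {μ : Module.End F Q} (hμ : μ ≠ 0) :
    ∃ x ∈ NonUnitalAlgebra.adjoin F (mulOps b Set.univ),
      x * μ ≠ 0 ∧ ∀ m ∈ level b L K (n + 1), x m ∈ L := by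
  have hstep : ∀ {μ : Module.End F Q}, μ ≠ 0 → ∃ T ∈ mulOps b K, T * μ ≠ 0 := fun hμ => by
    obtain ⟨s, hs⟩ := DFunLike.ne_iff.1 hμ
    obtain ⟨T, hT, hTs⟩ := exists_mulOps_apply_ne_zero hbr hbl hq hK hKa hs
    exact ⟨T, hT, fun h => hTs (by simpa using LinearMap.congr_fun h s)⟩
  have hA : ∀ {T}, T ∈ mulOps b K → T ∈ NonUnitalAlgebra.adjoin F (mulOps b Set.univ) :=
    fun hT => NonUnitalAlgebra.subset_adjoin F (mulOps_mono (Set.subset_univ _) hT)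
  induction n generalizing μ with
  | zero =>
    obtain ⟨T, hT, hTμ⟩ := hstep hμ
    exact ⟨T, hA hT, hTμ, fun m hm => mem_level_succ.1 hm T hT⟩
  | succ n ih =>
    obtain ⟨T, hT, hTμ⟩ := hstep hμ
    obtain ⟨x, hx, hxTμ, hxL⟩ := ih hTμ
    exact ⟨x * T, mul_mem hx (hA hT), by rwa [mul_assoc],
      fun m hm => hxL _ (mem_level_succ.1 hm T hT)⟩

end LeftQuotient

/-- Let `L` be a semiprime subalgebra of a symmetric Leibniz algebra `Q`
such that `Q` is an algebra of quotients of `L`. Then `A(Q)` is a left quotient algebra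
of `A_0 = {μ ∈ A(Q) : μ(L) ⊆ L}`. -/
theorem AQ_leftQuotient_of_A0 {F : Type*} [Field F] {Q : Type*} [AddCommGroup Q]
    [Module F Q] (b : Q →ₗ[F] Q →ₗ[F] Q) (hbr : IsRightLeibniz b)
    (hbl : IsLeftLeibniz b) (L : Submodule F Q) (hL : IsSubalgebraOf b L)
    (hsp : IsSemiprimeSub b L) (hq : IsAlgebraOfQuotients b L) :
    ∀ p q : Module.End F Q,
      p ∈ NonUnitalAlgebra.adjoin F (mulOps b (Set.univ : Set Q)) →
      q ∈ NonUnitalAlgebra.adjoin F (mulOps b (Set.univ : Set Q)) →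
      p ≠ 0 →
      ∃ x ∈ NonUnitalAlgebra.adjoin F (mulOps b (Set.univ : Set Q)),
        (∀ l ∈ L, x l ∈ L) ∧ x * p ≠ 0 ∧
        x * q ∈ NonUnitalAlgebra.adjoin F (mulOps b (Set.univ : Set Q)) ∧
        (∀ l ∈ L, (x * q) l ∈ L) := by
  intro p q _ hqA hp0
  obtain ⟨V, k, hqk⟩ := exists_finset_apply_mem_level_add hbr hbl hL hqA
  obtain ⟨K, hK, hKa, hKV⟩ := exists_ideal_le_colon hsp hbr hbl hL hq V
  have hmono := level_mono hbr hbl hL hK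
  obtain ⟨x, hxA, hxp, hxK⟩ := exists_mem_adjoin_mul_ne_zero hbr hbl hq hK hKa k hp0
  refine ⟨x, hxA, fun l hl => hxK l (hmono (Nat.zero_le _) hl), hxp, mul_mem hxA hqA,
    fun l hl => hxK _ (hmono (by omega) (hqk K hK hKV 0 l hl))⟩

end LeibnizQuot
end
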